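/- arXiv:1203.5465 — 4 statements merged into one kernel-verified Lean document; each statement's English description precedes it below -/
import Mathlib

section
/- The improper integral ∫₀^∞ k_s(s) k_θ(s) r(s) ds converges and equals 0; that is, lim_{S→∞} ∫₀^S k_s(s) k_θ(s) r(s) ds = 0. -/
/-!
By the Jacobi equation the integrand is `-r''`, so the integral over `[0, S]` equals
`1 - r'(S)` and the claim is `r'(S) → 1`. The hypotheses make `1 - r'² = z'²` and `|r''| r`
integrable. Integrating `(r r')' = r'² + r r''` gives `r r' ≥ S - C`, so eventually `r ≥ 1` and
`r' > 0`. Then `(1 - r'²)' = -2 r' r''` is dominated by `2 |r''| r`, hence integrable, so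
`1 - r'²` has a limit at infinity, which is `0` because `1 - r'²` is itself integrable.
-/

open Real MeasureTheory

/-- Radial principal curvature `k_s = r′z″ − r″z′` of the rotational hypersurface
with profile curve `(r, z)`. -/
noncomputable def radialCurv (r z : ℝ → ℝ) (s : ℝ) : ℝ :=
  deriv r s * deriv (deriv z) s - deriv (deriv r) s * deriv z s

/-- Angular principal curvature `k_θ = z′/r` of the rotational hypersurface
with profile curve `(r, z)`. -/
noncomputable def angularCurv (r z : ℝ → ℝ) (s : ℝ) : ℝ :=
  deriv z s / r s

open Filter Set Topology

theorem intervalIntegral_le_setIntegral_Ioi {g : ℝ → ℝ} {a b : ℝ} (hab : a ≤ b)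
    (hg : IntegrableOn g (Ioi a)) (hnn : ∀ s > a, 0 ≤ g s) :
    ∫ s in a..b, g s ≤ ∫ s in Ioi a, g s := by
  rw [intervalIntegral.integral_of_le hab]
  exact setIntegral_mono_set hg ((ae_restrict_iff' measurableSet_Ioi).2 (.of_forall hnn))
    Ioc_subset_Ioi_self.eventuallyLE

section SecondOrder

variable {f : ℝ → ℝ}

theorem ContDiff.hasDerivAt_deriv_of_two (hf : ContDiff ℝ 2 f) (x : ℝ) :
    HasDerivAt (deriv f) (deriv (deriv f) x) x :=
  (hf.deriv'.differentiable one_ne_zero x).hasDerivAt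

theorem ContDiff.continuous_deriv_deriv_of_two (hf : ContDiff ℝ 2 f) :
    Continuous (deriv (deriv f)) :=
  hf.deriv'.continuous_deriv le_rfl

theorem integral_deriv_sq_add_mul_deriv_deriv (hf : ContDiff ℝ 2 f) (a b : ℝ) :
    ∫ s in a..b, (deriv f s ^ 2 + f s * deriv (deriv f) s)
      = f b * deriv f b - f a * deriv f a := by
  have hf' : Continuous (deriv f) := hf.continuous_deriv (by norm_num)
  simpa only [sq] using intervalIntegral.integral_deriv_mul_eq_sub
    (fun x _ => (hf.differentiable (by norm_num) x).hasDerivAt)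
    (fun x _ => hf.hasDerivAt_deriv_of_two x) (hf'.intervalIntegrable a b)
    (hf.continuous_deriv_deriv_of_two.intervalIntegrable a b)

variable (hf : ContDiff ℝ 2 f) (h0 : f 0 = 0) (hnn : ∀ s ≥ 0, 0 ≤ f s)
  (hsq : ∀ s ≥ 0, deriv f s ^ 2 ≤ 1)
  (hdefect : IntegrableOn (fun s => 1 - deriv f s ^ 2) (Ioi 0))
  (hconc : IntegrableOn (fun s => |deriv (deriv f) s| * f s) (Ioi 0))
include hf h0 hnn hsq hdefect hconc

theorem exists_sub_le_mul_deriv : ∃ C, ∀ S ≥ 0, S - C ≤ f S * deriv f S := by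
  refine ⟨(∫ s in Ioi 0, 1 - deriv f s ^ 2) + ∫ s in Ioi 0, |deriv (deriv f) s| * f s,
    fun S hS => ?_⟩
  have hf' : Continuous (deriv f) := hf.continuous_deriv (by norm_num)
  have hf'' := hf.continuous_deriv_deriv_of_two
  have hdefect_le := intervalIntegral_le_setIntegral_Ioi hS hdefect
    (fun s hs => sub_nonneg.2 (hsq s hs.le))
  have hconc_le := intervalIntegral_le_setIntegral_Ioi hS hconc
    (fun s hs => mul_nonneg (abs_nonneg _) (hnn s hs.le))
  have hmul_ge : -∫ s in (0:ℝ)..S, |deriv (deriv f) s| * f s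
      ≤ ∫ s in (0:ℝ)..S, f s * deriv (deriv f) s := by
    rw [← intervalIntegral.integral_neg]
    refine intervalIntegral.integral_mono_on hS
      ((hf''.abs.mul hf.continuous).neg.intervalIntegrable 0 S)
      ((hf.continuous.mul hf'').intervalIntegrable 0 S) fun s hs => ?_
    nlinarith [neg_abs_le (deriv (deriv f) s), hnn s hs.1]
  have hsplit : ∫ s in (0:ℝ)..S, (deriv f s ^ 2 + f s * deriv (deriv f) s)
      = S - (∫ s in (0:ℝ)..S, (1 - deriv f s ^ 2))
          + ∫ s in (0:ℝ)..S, f s * deriv (deriv f) s := by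
    rw [intervalIntegral.integral_add (f := fun s => deriv f s ^ 2)
        (g := fun s => f s * deriv (deriv f) s) ((hf'.pow 2).intervalIntegrable 0 S)
        ((hf.continuous.mul hf'').intervalIntegrable 0 S),
      intervalIntegral.integral_sub (g := fun s => deriv f s ^ 2) intervalIntegrable_const
        ((hf'.pow 2).intervalIntegrable 0 S)]
    simp
  have hff' := integral_deriv_sq_add_mul_deriv_deriv hf 0 S
  rw [h0, zero_mul, sub_zero, hsplit] at hff'
  linarith

theorem eventually_one_le_and_deriv_pos : ∀ᶠ S in atTop, 1 ≤ f S ∧ 0 < deriv f S := by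
  obtain ⟨C, hC⟩ := exists_sub_le_mul_deriv hf h0 hnn hsq hdefect hconc
  filter_upwards [eventually_ge_atTop (max (C + 1) 0)] with S hS
  have hS0 : 0 ≤ S := le_of_max_le_right hS
  have hone : 1 ≤ f S * deriv f S := by linarith [hC S hS0, le_of_max_le_left hS]
  have hfS := hnn S hS0
  have hf'S : deriv f S ≤ 1 := by nlinarith [hsq S hS0]
  constructor <;> nlinarith

theorem tendsto_deriv_atTop_one : Tendsto (deriv f) atTop (𝓝 1) := by
  obtain ⟨T, hT⟩ := eventually_atTop.1
    ((eventually_one_le_and_deriv_pos hf h0 hnn hsq hdefect hconc).and (eventually_ge_atTop 0))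
  have hf' : Continuous (deriv f) := hf.continuous_deriv (by norm_num)
  have hf'' := hf.continuous_deriv_deriv_of_two
  have hderiv_int : IntegrableOn (fun s => -(2 * deriv f s * deriv (deriv f) s)) (Ioi T) := by
    refine Integrable.mono' ((hconc.mono_set (Ioi_subset_Ioi (hT T le_rfl).2)).const_mul 2)
      ((continuous_const.mul hf').mul hf'').neg.aestronglyMeasurable
      ((ae_restrict_iff' measurableSet_Ioi).2 (.of_forall fun s hs => ?_))
    obtain ⟨⟨hfs, -⟩, hs0⟩ := hT s hs.le
    have hf's : |deriv f s| ≤ 1 := (sq_le_one_iff_abs_le_one _).1 (hsq s hs0)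
    simp only [norm_neg, norm_mul, Real.norm_eq_abs, abs_two]
    nlinarith [abs_nonneg (deriv f s), abs_nonneg (deriv (deriv f) s)]
  have hdefect_tendsto : Tendsto (fun s => 1 - deriv f s ^ 2) atTop (𝓝 0) :=
    tendsto_zero_of_hasDerivAt_of_integrableOn_Ioi
      (fun s _ => by simpa using ((hf.hasDerivAt_deriv_of_two s).pow 2).const_sub 1)
      hderiv_int (hdefect.mono_set (Ioi_subset_Ioi (hT T le_rfl).2))
  have hgap : Tendsto (fun s => 1 - deriv f s) atTop (𝓝 0) := by
    refine squeeze_zero' ?_ ?_ hdefect_tendsto <;>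
      filter_upwards [eventually_ge_atTop T] with s hs <;>
      obtain ⟨⟨-, hpos⟩, hs0⟩ := hT s hs <;> nlinarith [hsq s hs0]
  simpa using tendsto_const_nhds.sub hgap (f := fun _ : ℝ => (1 : ℝ))

end SecondOrder

theorem integral_radialCurv_mul_angularCurv_mul {r z : ℝ → ℝ} (hr : ContDiff ℝ 2 r)
    (hjac : ∀ s > 0, deriv (deriv r) s + radialCurv r z s * angularCurv r z s * r s = 0)
    {S : ℝ} (hS : 0 ≤ S) :
    ∫ s in (0:ℝ)..S, radialCurv r z s * angularCurv r z s * r s = deriv r 0 - deriv r S := by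
  rw [intervalIntegral.integral_congr_ae (g := fun s => -deriv (deriv r) s)
      (.of_forall fun s hs => by rw [uIoc_of_le hS] at hs; linarith [hjac s hs.1]),
    intervalIntegral.integral_neg, intervalIntegral.integral_eq_sub_of_hasDerivAt
      (fun x _ => hr.hasDerivAt_deriv_of_two x)
      (hr.continuous_deriv_deriv_of_two.intervalIntegrable 0 S),
    neg_sub]

theorem curvature_integral_zero_general
    (r z : ℝ → ℝ)
    (hr : ContDiff ℝ 2 r)
    (hr0 : r 0 = 0) (hr0' : deriv r 0 = 1)
    (hrpos : ∀ s > 0, 0 < r s)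
    (harc : ∀ s ≥ 0, (deriv r s) ^ 2 + (deriv z s) ^ 2 = 1)
    (hjac : ∀ s > 0,
      deriv (deriv r) s + radialCurv r z s * angularCurv r z s * r s = 0)
    (hint1 : IntegrableOn (fun s => (angularCurv r z s) ^ 2 * (r s) ^ 2) (Set.Ici 0))
    (hint2 : IntegrableOn (fun s => |radialCurv r z s * angularCurv r z s| * (r s) ^ 2) (Set.Ici 0))
    : Filter.Tendsto
        (fun S => ∫ s in (0 : ℝ)..S, radialCurv r z s * angularCurv r z s * r s)
        Filter.atTop (nhds 0) := by
  have hnn : ∀ s ≥ 0, 0 ≤ r s := fun s hs =>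
    hs.eq_or_lt.elim (fun h => h ▸ hr0.ge) fun h => (hrpos s h).le
  have hdefect : IntegrableOn (fun s => 1 - deriv r s ^ 2) (Ioi 0) := by
    refine (hint1.mono_set Ioi_subset_Ici_self).congr_fun (fun s hs => ?_)
      measurableSet_Ioi
    have := (hrpos s hs).ne'
    simp only [angularCurv]
    field_simp
    linarith [harc s (le_of_lt hs)]
  have hconc : IntegrableOn (fun s => |deriv (deriv r) s| * r s) (Ioi 0) := by
    refine (hint2.mono_set Ioi_subset_Ici_self).congr_fun (fun s hs => ?_)
      measurableSet_Ioi
    rw [eq_neg_of_add_eq_zero_left (hjac s hs), abs_neg, abs_mul _ (r s), abs_of_pos (hrpos s hs)]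
    ring
  have hlim := tendsto_deriv_atTop_one hr hr0 hnn
    (fun s hs => by nlinarith [harc s hs, sq_nonneg (deriv z s)]) hdefect hconc
  have hgap := (tendsto_const_nhds (x := (1 : ℝ))).sub hlim
  rw [sub_self] at hgap
  refine hgap.congr' ?_
  filter_upwards [eventually_ge_atTop 0] with S hS
  rw [integral_radialCurv_mul_angularCurv_mul hr hjac hS, hr0']

theorem curvature_integral_zero
    (r z : ℝ → ℝ)
    (hr : ContDiff ℝ 2 r) (hz : ContDiff ℝ 2 z)
    (hr0 : r 0 = 0) (hr0' : deriv r 0 = 1)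
    (hrpos : ∀ s > 0, 0 < r s)
    (harc : ∀ s ≥ 0, (deriv r s) ^ 2 + (deriv z s) ^ 2 = 1)
    (hjac : ∀ s > 0,
      deriv (deriv r) s + radialCurv r z s * angularCurv r z s * r s = 0)
    (hint1 : IntegrableOn (fun s => (angularCurv r z s) ^ 2 * (r s) ^ 2) (Set.Ici 0))
    (hint2 : IntegrableOn (fun s => |radialCurv r z s * angularCurv r z s| * (r s) ^ 2) (Set.Ici 0))
    : Filter.Tendsto
        (fun S => ∫ s in (0 : ℝ)..S, radialCurv r z s * angularCurv r z s * r s)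
        Filter.atTop (nhds 0) :=
  curvature_integral_zero_general r z hr hr0 hr0' hrpos harc hjac hint1 hint2
end

section
/- The limit lim_{s→∞} z′(s) = 0 holds. -/
open Real MeasureTheory

/-!
Since `z′² = 1 − r′²` and, by the Jacobi equation, `|k_s k_θ| r² = |r r″|`, the hypotheses say
that `1 − r′²` and `r r″` are integrable on `[0, ∞)`; let `A`, `B` be the integrals of
`1 − r′²` and `|r r″|`. Integrating `(r r′)′ = r′² + r r″` gives `r(b) ≥ r(b) r′(b) ≥ b − A − B`,
so `r` grows linearly, while integrating `(r (1 − r′²))′ = r′(1 − r′²) − 2 r r′ r″` gives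
`r(b) (1 − r′(b)²) ≤ A + 2B`. Hence `z′(b)² = 1 − r′(b)² = O(1/b)`.
-/

open Set Filter Topology intervalIntegral

lemma intervalIntegral_le_setIntegral_Ici {f : ℝ → ℝ} {a b : ℝ} (hab : a ≤ b)
    (hf : IntegrableOn f (Ici a)) (hf0 : ∀ x ≥ a, 0 ≤ f x) :
    ∫ x in a..b, f x ≤ ∫ x in Ici a, f x := by
  rw [integral_of_le hab]
  exact setIntegral_mono_set hf ((ae_restrict_iff' measurableSet_Ici).2 (.of_forall hf0))
    (Ioc_subset_Icc_self.trans Icc_subset_Ici_self).eventuallyLE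

section SecondOrder

variable {r : ℝ → ℝ}

lemma ContDiff.hasDerivAt_deriv_deriv (hr : ContDiff ℝ 2 r) (x : ℝ) :
    HasDerivAt (deriv r) (deriv (deriv r) x) x :=
  ((hr.deriv' (n := 1)).differentiable one_ne_zero x).hasDerivAt

lemma ContDiff.continuous_deriv_deriv (hr : ContDiff ℝ 2 r) : Continuous (deriv (deriv r)) :=
  (hr.deriv' (n := 1)).continuous_deriv le_rfl

lemma ContDiff.intervalIntegrable_one_sub_deriv_sq (hr : ContDiff ℝ 2 r) (a b : ℝ) :
    IntervalIntegrable (fun s => 1 - deriv r s ^ 2) volume a b :=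
  (continuous_const.sub ((hr.continuous_deriv (by norm_num)).pow 2)).intervalIntegrable a b

lemma ContDiff.intervalIntegrable_abs_mul_deriv_deriv (hr : ContDiff ℝ 2 r) (a b : ℝ) :
    IntervalIntegrable (fun s => |r s * deriv (deriv r) s|) volume a b :=
  (hr.continuous.mul hr.continuous_deriv_deriv).abs.intervalIntegrable a b

lemma sub_integral_sub_integral_le_mul_deriv (hr : ContDiff ℝ 2 r) (hr0 : r 0 = 0)
    {b : ℝ} (hb : 0 ≤ b) :
    b - (∫ s in 0..b, (1 - deriv r s ^ 2)) - ∫ s in 0..b, |r s * deriv (deriv r) s|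
      ≤ r b * deriv r b := by
  have hr' := hr.continuous_deriv (by norm_num)
  have key := integral_le_sub_of_hasDeriv_right_of_le hb
    (g := fun s => r s * deriv r s) (g' := fun s => deriv r s ^ 2 + r s * deriv (deriv r) s)
    (φ := fun s => 1 - (1 - deriv r s ^ 2) - |r s * deriv (deriv r) s|)
    (hr.continuous.mul hr').continuousOn
    (fun x _ => ((hr.differentiable (by norm_num) x).hasDerivAt.mul
      (hr.hasDerivAt_deriv_deriv x)).hasDerivWithinAt.congr_deriv (by ring))
    ((continuous_const.sub (continuous_const.sub (hr'.pow 2))).sub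
      (hr.continuous.mul hr.continuous_deriv_deriv).abs).integrableOn_Icc
    (fun x _ => by linarith [neg_abs_le (r x * deriv (deriv r) x)])
  rwa [integral_sub (intervalIntegrable_const.sub (hr.intervalIntegrable_one_sub_deriv_sq 0 b))
    (hr.intervalIntegrable_abs_mul_deriv_deriv 0 b), integral_sub intervalIntegrable_const
    (hr.intervalIntegrable_one_sub_deriv_sq 0 b), integral_one, hr0, zero_mul, sub_zero,
    sub_zero] at key

lemma mul_one_sub_sq_sub_le_of_abs_le_one (u v w : ℝ) (hv : |v| ≤ 1) :
    v * (1 - v ^ 2) - 2 * (u * w) * v ≤ (1 - v ^ 2) + 2 * |u * w| := by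
  have hv2 : v ^ 2 ≤ 1 := (sq_le_one_iff_abs_le_one v).2 hv
  have huwv : -(u * w * v) ≤ |u * w| :=
    calc -(u * w * v) ≤ |u * w * v| := neg_le_abs _
      _ = |u * w| * |v| := abs_mul _ _
      _ ≤ |u * w| := mul_le_of_le_one_right (abs_nonneg _) hv
  nlinarith [mul_nonneg (sub_nonneg.2 (abs_le.1 hv).2) (sub_nonneg.2 hv2)]

lemma mul_one_sub_deriv_sq_le (hr : ContDiff ℝ 2 r) (hr0 : r 0 = 0) {b : ℝ} (hb : 0 ≤ b)
    (hr'b : ∀ s ∈ Ioo 0 b, |deriv r s| ≤ 1) :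
    r b * (1 - deriv r b ^ 2)
      ≤ (∫ s in 0..b, (1 - deriv r s ^ 2)) + 2 * ∫ s in 0..b, |r s * deriv (deriv r) s| := by
  have hr' := hr.continuous_deriv (by norm_num)
  have key := sub_le_integral_of_hasDeriv_right_of_le hb
    (g := fun s => r s * (1 - deriv r s ^ 2))
    (g' := fun s => deriv r s * (1 - deriv r s ^ 2) - 2 * (r s * deriv (deriv r) s) * deriv r s)
    (φ := fun s => (1 - deriv r s ^ 2) + 2 * |r s * deriv (deriv r) s|)
    (hr.continuous.mul (continuous_const.sub (hr'.pow 2))).continuousOn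
    (fun x _ => ((hr.differentiable (by norm_num) x).hasDerivAt.mul
      (((hr.hasDerivAt_deriv_deriv x).pow 2).const_sub 1)).hasDerivWithinAt.congr_deriv
        (by simp only [Pi.pow_apply, Nat.cast_ofNat]; ring))
    ((continuous_const.sub (hr'.pow 2)).add
      (continuous_const.mul (hr.continuous.mul hr.continuous_deriv_deriv).abs)).integrableOn_Icc
    (fun x hx => mul_one_sub_sq_sub_le_of_abs_le_one _ _ _ (hr'b x hx))
  rwa [integral_add (hr.intervalIntegrable_one_sub_deriv_sq 0 b)
    ((hr.intervalIntegrable_abs_mul_deriv_deriv 0 b).const_mul 2),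
    intervalIntegral.integral_const_mul, hr0, zero_mul, sub_zero] at key

theorem tendsto_one_sub_deriv_sq_atTop (hr : ContDiff ℝ 2 r) (hr0 : r 0 = 0)
    (hr_nonneg : ∀ s ≥ 0, 0 ≤ r s) (hr' : ∀ s ≥ 0, |deriv r s| ≤ 1)
    (h_one_sub : IntegrableOn (fun s => 1 - deriv r s ^ 2) (Ici 0))
    (h_mul : IntegrableOn (fun s => r s * deriv (deriv r) s) (Ici 0)) :
    Tendsto (fun s => 1 - deriv r s ^ 2) atTop (𝓝 0) := by
  set A := ∫ s in Ici 0, (1 - deriv r s ^ 2)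
  set B := ∫ s in Ici 0, |r s * deriv (deriv r) s|
  have h_one_sub_nonneg (s : ℝ) (hs : s ≥ 0) : 0 ≤ 1 - deriv r s ^ 2 :=
    sub_nonneg.2 ((sq_le_one_iff_abs_le_one _).2 (hr' s hs))
  have hA (b : ℝ) (hb : 0 ≤ b) : ∫ s in 0..b, (1 - deriv r s ^ 2) ≤ A :=
    intervalIntegral_le_setIntegral_Ici hb h_one_sub h_one_sub_nonneg
  have hB (b : ℝ) (hb : 0 ≤ b) : ∫ s in 0..b, |r s * deriv (deriv r) s| ≤ B :=
    intervalIntegral_le_setIntegral_Ici hb h_mul.abs fun _ _ => abs_nonneg _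
  have h_linear_growth (b : ℝ) (hb : 0 ≤ b) : b - (A + B) ≤ r b := by
    have hrr' : r b * deriv r b ≤ r b :=
      mul_le_of_le_one_right (hr_nonneg b hb) (abs_le.1 (hr' b hb)).2
    linarith [sub_integral_sub_integral_le_mul_deriv hr hr0 hb, hA b hb, hB b hb]
  have h_weighted (b : ℝ) (hb : 0 ≤ b) : r b * (1 - deriv r b ^ 2) ≤ A + 2 * B := by
    linarith [mul_one_sub_deriv_sq_le hr hr0 hb (fun s hs => hr' s hs.1.le), hA b hb, hB b hb]
  have h_majorant : Tendsto (fun b => (A + 2 * B) / (b - (A + B))) atTop (𝓝 0) :=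
    tendsto_const_nhds.div_atTop (tendsto_atTop_add_const_right _ _ tendsto_id)
  refine tendsto_of_tendsto_of_tendsto_of_le_of_le' tendsto_const_nhds h_majorant
    (eventually_ge_atTop 0 |>.mono h_one_sub_nonneg) ?_
  filter_upwards [eventually_gt_atTop (A + B), eventually_ge_atTop 0] with b hb hb0
  rw [le_div_iff₀ (sub_pos.2 hb)]
  calc (1 - deriv r b ^ 2) * (b - (A + B)) ≤ (1 - deriv r b ^ 2) * r b :=
        mul_le_mul_of_nonneg_left (h_linear_growth b hb0) (h_one_sub_nonneg b hb0)
    _ = r b * (1 - deriv r b ^ 2) := mul_comm _ _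
    _ ≤ A + 2 * B := h_weighted b hb0

end SecondOrder

theorem deriv_z_tendsto_zero_general
    (r z : ℝ → ℝ)
    (hr : ContDiff ℝ 2 r)
    (hr0 : r 0 = 0)
    (hrpos : ∀ s > 0, 0 < r s)
    (harc : ∀ s ≥ 0, (deriv r s) ^ 2 + (deriv z s) ^ 2 = 1)
    (hjac : ∀ s > 0,
      deriv (deriv r) s + radialCurv r z s * angularCurv r z s * r s = 0)
    (hint1 : IntegrableOn (fun s => (angularCurv r z s) ^ 2 * (r s) ^ 2) (Set.Ici 0))
    (hint2 : IntegrableOn (fun s => |radialCurv r z s * angularCurv r z s| * (r s) ^ 2) (Set.Ici 0))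
    : Filter.Tendsto (deriv z) Filter.atTop (nhds 0) := by
  have hz' (s : ℝ) (hs : s ≥ 0) : deriv z s ^ 2 = 1 - deriv r s ^ 2 := by linarith [harc s hs]
  have hr_nonneg (s : ℝ) (hs : s ≥ 0) : 0 ≤ r s := by
    rcases hs.eq_or_lt with rfl | hs
    exacts [hr0.ge, (hrpos s hs).le]
  have hr' (s : ℝ) (hs : s ≥ 0) : |deriv r s| ≤ 1 :=
    (sq_le_one_iff_abs_le_one _).1 (by linarith [hz' s hs, sq_nonneg (deriv z s)])
  rw [integrableOn_Ici_iff_integrableOn_Ioi] at hint1 hint2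
  have h_defect : IntegrableOn (fun s => 1 - deriv r s ^ 2) (Ici 0) := by
    rw [integrableOn_Ici_iff_integrableOn_Ioi]
    refine hint1.congr_fun (fun s hs => ?_) measurableSet_Ioi
    dsimp only
    rw [angularCurv, div_pow, div_mul_cancel₀ _ (pow_ne_zero 2 (hrpos s hs).ne'), hz' s hs.le]
  have h_jacobi : IntegrableOn (fun s => r s * deriv (deriv r) s) (Ici 0) := by
    rw [integrableOn_Ici_iff_integrableOn_Ioi]
    refine (integrable_norm_iff
      (hr.continuous.mul hr.continuous_deriv_deriv).aestronglyMeasurable).1 <|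
      hint2.congr_fun (fun s hs => ?_) measurableSet_Ioi
    dsimp only [Pi.mul_apply]
    rw [Real.norm_eq_abs, eq_neg_of_add_eq_zero_left (hjac s hs), mul_neg, abs_neg]
    simp only [abs_mul, abs_of_pos (hrpos s hs)]
    ring
  have hz'_sq : Tendsto (fun s => deriv z s ^ 2) atTop (𝓝 0) :=
    (tendsto_one_sub_deriv_sq_atTop hr hr0 hr_nonneg hr' h_defect h_jacobi).congr'
      (eventually_ge_atTop 0 |>.mono fun s hs => (hz' s hs).symm)
  rw [tendsto_zero_iff_abs_tendsto_zero]
  simpa [Function.comp_def, sqrt_sq_eq_abs] using hz'_sq.sqrt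

theorem deriv_z_tendsto_zero
    (r z : ℝ → ℝ)
    (hr : ContDiff ℝ 2 r) (hz : ContDiff ℝ 2 z)
    (hr0 : r 0 = 0) (hr0' : deriv r 0 = 1)
    (hrpos : ∀ s > 0, 0 < r s)
    (harc : ∀ s ≥ 0, (deriv r s) ^ 2 + (deriv z s) ^ 2 = 1)
    (hjac : ∀ s > 0,
      deriv (deriv r) s + radialCurv r z s * angularCurv r z s * r s = 0)
    (hint1 : IntegrableOn (fun s => (angularCurv r z s) ^ 2 * (r s) ^ 2) (Set.Ici 0))
    (hint2 : IntegrableOn (fun s => |radialCurv r z s * angularCurv r z s| * (r s) ^ 2) (Set.Ici 0))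
    : Filter.Tendsto (deriv z) Filter.atTop (nhds 0) :=
  deriv_z_tendsto_zero_general r z hr hr0 hrpos harc hjac hint1 hint2
end

section
/- If in addition r is not the identity function s ↦ s (equivalently, Σ is not a hyperplane), then there exists a nonempty open interval I ⊂ (0,∞) on which k_s(s) k_θ(s) > 0; that is, the principal curvatures k_s and k_θ are nonzero and of the same sign on I. -/
open Real MeasureTheory

/-!
If `k_s k_θ ≤ 0` on all of `(0, ∞)`, the Jacobi equation `r″ = -k_s k_θ r` makes `r` convex on
`[0, ∞)`, so `r′ ≥ r′(0) = 1` there; the arclength condition gives `r′ ≤ 1`, hence `r′ ≡ 1` and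
`r = id`. So `k_s k_θ > 0` at some `s₀ > 0`, and by continuity (`r(s₀) > 0`) on an interval
around `s₀`.
-/

theorem continuous_deriv_deriv {f : ℝ → ℝ} (hf : ContDiff ℝ 2 f) : Continuous (deriv (deriv f)) :=
  ((contDiff_succ_iff_deriv (n := 1)).mp hf).2.2.continuous_deriv_one

theorem continuous_radialCurv {r z : ℝ → ℝ} (hr : ContDiff ℝ 2 r) (hz : ContDiff ℝ 2 z) :
    Continuous (radialCurv r z) :=
  ((hr.continuous_deriv one_le_two).mul (continuous_deriv_deriv hz)).sub
    ((continuous_deriv_deriv hr).mul (hz.continuous_deriv one_le_two))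

theorem continuousAt_angularCurv {r z : ℝ → ℝ} {s : ℝ} (hr : ContinuousAt r s)
    (hz : ContDiff ℝ 1 z) (hs : r s ≠ 0) : ContinuousAt (angularCurv r z) s :=
  hz.continuous_deriv_one.continuousAt.div hr hs

theorem eq_of_deriv_eq_one {f : ℝ → ℝ} (hf : Differentiable ℝ f) (hf0 : f 0 = 0)
    (hf' : ∀ s ≥ 0, deriv f s = 1) : ∀ s ≥ 0, f s = s := by
  intro s hs
  refine eq_of_has_deriv_right_eq (f' := fun _ ↦ 1) (a := 0) (b := s) (fun x hx ↦ ?_)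
    (fun x _ ↦ (hasDerivAt_id x).hasDerivWithinAt) hf.continuous.continuousOn
    continuous_id.continuousOn hf0 s ⟨hs, le_rfl⟩
  simpa [hf' x hx.1] using (hf x).hasDerivAt.hasDerivWithinAt

theorem deriv_eq_one_of_deriv_deriv_nonneg {f : ℝ → ℝ} (hf : ContDiff ℝ 2 f)
    (hf0' : deriv f 0 = 1) (hle : ∀ s ≥ 0, deriv f s ≤ 1)
    (hconv : ∀ s > 0, 0 ≤ deriv (deriv f) s) : ∀ s ≥ 0, deriv f s = 1 := by
  have hf' : ContDiff ℝ 1 (deriv f) := ((contDiff_succ_iff_deriv (n := 1)).mp hf).2.2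
  have hmono : MonotoneOn (deriv f) (Set.Ici 0) :=
    monotoneOn_of_deriv_nonneg (convex_Ici 0) hf'.continuous.continuousOn
      (hf'.differentiable one_ne_zero).differentiableOn (by simpa using hconv)
  intro s hs
  have hge : deriv f 0 ≤ deriv f s := hmono Set.self_mem_Ici hs hs
  exact le_antisymm (hle s hs) (hf0' ▸ hge)

theorem exists_Ioo_pos_of_continuousAt {f : ℝ → ℝ} {s₀ : ℝ} (hf : ContinuousAt f s₀)
    (hs₀ : 0 < s₀) (hpos : 0 < f s₀) :
    ∃ α β : ℝ, 0 ≤ α ∧ α < β ∧ ∀ s ∈ Set.Ioo α β, 0 < f s := by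
  obtain ⟨l, u, ⟨hl, hu⟩, hsub⟩ :=
    mem_nhds_iff_exists_Ioo_subset.mp (hf.preimage_mem_nhds (Ioi_mem_nhds hpos))
  refine ⟨max l 0, u, le_max_right l 0, max_lt_iff.mpr ⟨hl.trans hu, hs₀.trans hu⟩, ?_⟩
  exact fun s ⟨hs, hsu⟩ ↦ hsub ⟨(le_max_left l 0).trans_lt hs, hsu⟩

theorem same_sign_interval_general
    (r z : ℝ → ℝ)
    (hr : ContDiff ℝ 2 r) (hz : ContDiff ℝ 2 z)
    (hr0 : r 0 = 0) (hr0' : deriv r 0 = 1)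
    (hrpos : ∀ s > 0, 0 < r s)
    (harc : ∀ s ≥ 0, (deriv r s) ^ 2 + (deriv z s) ^ 2 = 1)
    (hjac : ∀ s > 0,
      deriv (deriv r) s + radialCurv r z s * angularCurv r z s * r s = 0)
    (hnotflat : ¬ ∀ s ≥ (0 : ℝ), r s = s)
    : ∃ α β : ℝ, 0 ≤ α ∧ α < β ∧
        ∀ s ∈ Set.Ioo α β, 0 < radialCurv r z s * angularCurv r z s := by
  obtain ⟨s₀, hs₀, hpos⟩ : ∃ s₀ > 0, 0 < radialCurv r z s₀ * angularCurv r z s₀ := by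
    by_contra! hnonpos
    have hconv : ∀ s > 0, 0 ≤ deriv (deriv r) s := fun s hs ↦ by
      linarith [hjac s hs, mul_nonpos_of_nonpos_of_nonneg (hnonpos s hs) (hrpos s hs).le]
    have hle : ∀ s ≥ 0, deriv r s ≤ 1 := fun s hs ↦ by
      nlinarith [harc s hs, sq_nonneg (deriv z s), sq_nonneg (deriv r s - 1)]
    exact hnotflat (eq_of_deriv_eq_one (hr.differentiable two_ne_zero) hr0
      (deriv_eq_one_of_deriv_deriv_nonneg hr hr0' hle hconv))
  have hcont : ContinuousAt (fun s ↦ radialCurv r z s * angularCurv r z s) s₀ :=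
    (continuous_radialCurv hr hz).continuousAt.mul
      (continuousAt_angularCurv hr.continuous.continuousAt (hz.of_le one_le_two)
        (hrpos s₀ hs₀).ne')
  exact exists_Ioo_pos_of_continuousAt hcont hs₀ hpos

theorem same_sign_interval
    (r z : ℝ → ℝ)
    (hr : ContDiff ℝ 2 r) (hz : ContDiff ℝ 2 z)
    (hr0 : r 0 = 0) (hr0' : deriv r 0 = 1)
    (hrpos : ∀ s > 0, 0 < r s)
    (harc : ∀ s ≥ 0, (deriv r s) ^ 2 + (deriv z s) ^ 2 = 1)
    (hjac : ∀ s > 0,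
      deriv (deriv r) s + radialCurv r z s * angularCurv r z s * r s = 0)
    (hint1 : IntegrableOn (fun s => (angularCurv r z s) ^ 2 * (r s) ^ 2) (Set.Ici 0))
    (hint2 : IntegrableOn (fun s => |radialCurv r z s * angularCurv r z s| * (r s) ^ 2) (Set.Ici 0))
    (hnotflat : ¬ ∀ s ≥ (0 : ℝ), r s = s)
    : ∃ α β : ℝ, 0 ≤ α ∧ α < β ∧
        ∀ s ∈ Set.Ioo α β, 0 < radialCurv r z s * angularCurv r z s :=
  same_sign_interval_general r z hr hz hr0 hr0' hrpos harc hjac hnotflat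
end

section
/- There exist constants C > 0 and s₀ ≥ 1 such that for all s ≥ s₀ one has |∫₀ˢ r(v)² dv − s³/3| ≤ C·s²; equivalently, the ball volume V(s) = 4π ∫₀ˢ r(v)² dv satisfies (4π/3)s³ − 4πC s² ≤ V(s) ≤ (4π/3)s³ + 4πC s² for all s ≥ s₀. -/
open Real MeasureTheory Set

/-! Since `r′² = 1 − z′² = 1 − k_θ² r²` and `r r″ = −k_s k_θ r²`, the defect
`(r r′)′ − 1 = r′² + r r″ − 1` is bounded by `(|k_s k_θ| + k_θ²) r²`, which is integrable on
`[0, ∞)`. Hence `r r′ − s` stays bounded by some `D`; integrating `(r² − s²)′ = 2 (r r′ − s)`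
gives `|r² − s²| ≤ 2 D s`, and integrating once more gives `|∫₀ˢ r² − s³/3| ≤ D s²`. -/

theorem abs_sub_le_integral_of_abs_deriv_le {f f' φ : ℝ → ℝ} {a b : ℝ} (hab : a ≤ b)
    (hf : ∀ x ∈ uIcc a b, HasDerivAt f (f' x) x) (hf' : IntervalIntegrable f' volume a b)
    (hφ : IntervalIntegrable φ volume a b) (hle : ∀ x ∈ Ioc a b, |f' x| ≤ φ x) :
    |f b - f a| ≤ ∫ x in a..b, φ x := by
  rw [← intervalIntegral.integral_eq_sub_of_hasDerivAt hf hf']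
  exact intervalIntegral.norm_integral_le_of_norm_le hab
    (ae_of_all _ fun x hx => (norm_eq_abs (f' x)).trans_le (hle x hx)) hφ

section Profile

variable {r : ℝ → ℝ}

theorem abs_mul_deriv_sub_le_setIntegral {h : ℝ → ℝ} (hr : ContDiff ℝ 2 r) (hr0 : r 0 = 0)
    (hh : IntegrableOn h (Ioi 0))
    (hle : ∀ v > 0, |deriv r v ^ 2 + r v * deriv (deriv r) v - 1| ≤ h v) {u : ℝ} (hu : 0 ≤ u) :
    |r u * deriv r u - u| ≤ ∫ v in Ioi 0, h v := by
  have hr' : ContDiff ℝ 1 (deriv r) := hr.deriv'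
  have hF : Continuous fun v => deriv r v ^ 2 + r v * deriv (deriv r) v - 1 :=
    ((hr.continuous_deriv one_le_two).pow 2).add
      (hr.continuous.mul (hr'.continuous_deriv le_rfl)) |>.sub continuous_const
  have hderiv : ∀ x ∈ uIcc 0 u, HasDerivAt (fun v => r v * deriv r v - v)
      (deriv r x ^ 2 + r x * deriv (deriv r) x - 1) x := fun x _ => by
    refine (((hr.differentiable two_ne_zero x).hasDerivAt.mul
      (hr'.differentiable one_ne_zero x).hasDerivAt).sub (hasDerivAt_id' x)).congr_deriv ?_
    ring
  calc |r u * deriv r u - u|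
      = |(r u * deriv r u - u) - (r 0 * deriv r 0 - 0)| := by rw [hr0]; simp
    _ ≤ ∫ v in 0..u, h v :=
        abs_sub_le_integral_of_abs_deriv_le hu hderiv (hF.intervalIntegrable _ _)
          ((intervalIntegrable_iff_integrableOn_Ioc_of_le hu).2 (hh.mono_set Ioc_subset_Ioi_self))
          fun v hv => hle v hv.1
    _ ≤ ∫ v in Ioi 0, h v := by
        rw [intervalIntegral.integral_of_le hu]
        refine setIntegral_mono_set hh ?_ (ae_of_all _ Ioc_subset_Ioi_self)
        exact ae_restrict_of_forall_mem measurableSet_Ioi fun v hv =>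
          (abs_nonneg _).trans (hle v hv)

theorem abs_sq_sub_sq_le {D : ℝ} (hr : ContDiff ℝ 1 r) (hr0 : r 0 = 0)
    (hD : ∀ u ≥ 0, |r u * deriv r u - u| ≤ D) {s : ℝ} (hs : 0 ≤ s) :
    |r s ^ 2 - s ^ 2| ≤ 2 * D * s := by
  have hderiv : ∀ x ∈ uIcc 0 s, HasDerivAt (fun v => r v ^ 2 - v ^ 2)
      (2 * (r x * deriv r x - x)) x := fun x _ => by
    refine (((hr.differentiable one_ne_zero x).hasDerivAt.pow 2).sub
      (hasDerivAt_pow 2 x)).congr_deriv ?_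
    ring
  have hcont : Continuous fun x => 2 * (r x * deriv r x - x) := by
    have := hr.continuous_deriv le_rfl
    fun_prop
  calc |r s ^ 2 - s ^ 2| = |(r s ^ 2 - s ^ 2) - (r 0 ^ 2 - 0 ^ 2)| := by rw [hr0]; simp
    _ ≤ ∫ _ in 0..s, 2 * D :=
        abs_sub_le_integral_of_abs_deriv_le hs hderiv (hcont.intervalIntegrable _ _)
          intervalIntegrable_const fun x hx => by
            rw [abs_mul, abs_two]
            linarith [hD x hx.1.le]
    _ = 2 * D * s := by
        rw [intervalIntegral.integral_const, smul_eq_mul, sub_zero]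
        ring

theorem abs_integral_sq_sub_cube_le {D : ℝ} (hr : Continuous r)
    (hD : ∀ v ≥ 0, |r v ^ 2 - v ^ 2| ≤ 2 * D * v) {s : ℝ} (hs : 0 ≤ s) :
    |(∫ v in (0 : ℝ)..s, r v ^ 2) - s ^ 3 / 3| ≤ D * s ^ 2 := by
  have hr2 : Continuous fun v => r v ^ 2 := hr.pow 2
  have hderiv : ∀ x ∈ uIcc 0 s, HasDerivAt (fun u => (∫ v in (0 : ℝ)..u, r v ^ 2) - u ^ 3 / 3)
      (r x ^ 2 - x ^ 2) x := fun x _ => by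
    refine ((hr2.integral_hasStrictDerivAt 0 x).hasDerivAt.sub
      ((hasDerivAt_pow 3 x).div_const 3)).congr_deriv ?_
    ring
  calc |(∫ v in (0 : ℝ)..s, r v ^ 2) - s ^ 3 / 3|
      = |((∫ v in (0 : ℝ)..s, r v ^ 2) - s ^ 3 / 3)
          - ((∫ v in (0 : ℝ)..0, r v ^ 2) - 0 ^ 3 / 3)| := by simp
    _ ≤ ∫ v in 0..s, 2 * D * v :=
        abs_sub_le_integral_of_abs_deriv_le hs hderiv
          ((hr2.sub (continuous_pow 2)).intervalIntegrable _ _)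
          ((continuous_const.mul continuous_id).intervalIntegrable _ _) fun x hx => hD x hx.1.le
    _ = D * s ^ 2 := by
        rw [intervalIntegral.integral_const_mul, integral_id]
        ring

end Profile

theorem abs_sq_deriv_add_mul_deriv_deriv_sub_one_le {r z : ℝ → ℝ} {v : ℝ} (hrv : r v ≠ 0)
    (harc : deriv r v ^ 2 + deriv z v ^ 2 = 1)
    (hjac : deriv (deriv r) v + radialCurv r z v * angularCurv r z v * r v = 0) :
    |deriv r v ^ 2 + r v * deriv (deriv r) v - 1|
      ≤ |radialCurv r z v * angularCurv r z v| * r v ^ 2 + angularCurv r z v ^ 2 * r v ^ 2 := by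
  have hz : deriv z v ^ 2 = angularCurv r z v ^ 2 * r v ^ 2 := by
    rw [angularCurv]; field_simp
  have hF : deriv r v ^ 2 + r v * deriv (deriv r) v - 1
      = -(radialCurv r z v * angularCurv r z v) * r v ^ 2 - angularCurv r z v ^ 2 * r v ^ 2 := by
    rw [← hz]; linear_combination harc + r v * hjac
  rw [hF]
  refine (abs_sub _ _).trans_eq ?_
  rw [abs_mul, abs_neg, abs_of_nonneg (sq_nonneg (r v)),
    abs_of_nonneg (by positivity : 0 ≤ angularCurv r z v ^ 2 * r v ^ 2)]

theorem volume_asymptotics_general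
    (r z : ℝ → ℝ)
    (hr : ContDiff ℝ 2 r)
    (hr0 : r 0 = 0)
    (hrpos : ∀ s > 0, 0 < r s)
    (harc : ∀ s ≥ 0, (deriv r s) ^ 2 + (deriv z s) ^ 2 = 1)
    (hjac : ∀ s > 0,
      deriv (deriv r) s + radialCurv r z s * angularCurv r z s * r s = 0)
    (hint1 : IntegrableOn (fun s => (angularCurv r z s) ^ 2 * (r s) ^ 2) (Set.Ici 0))
    (hint2 : IntegrableOn (fun s => |radialCurv r z s * angularCurv r z s| * (r s) ^ 2) (Set.Ici 0))
    : ∃ C > (0 : ℝ), ∃ s₀ ≥ (1 : ℝ), ∀ s ≥ s₀,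
      |(∫ v in (0 : ℝ)..s, (r v) ^ 2) - s ^ 3 / 3| ≤ C * s ^ 2 := by
  set D := ∫ v in Ioi 0,
    |radialCurv r z v * angularCurv r z v| * r v ^ 2 + angularCurv r z v ^ 2 * r v ^ 2
  have hD : 0 ≤ D := setIntegral_nonneg measurableSet_Ioi fun v _ => by positivity
  have hrr' : ∀ u ≥ 0, |r u * deriv r u - u| ≤ D :=
    fun u => abs_mul_deriv_sub_le_setIntegral hr hr0
      ((hint2.add hint1).mono_set Ioi_subset_Ici_self) fun v hv =>
        abs_sq_deriv_add_mul_deriv_deriv_sub_one_le (hrpos v hv).ne' (harc v hv.le) (hjac v hv)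
  have hr2 : ∀ v ≥ 0, |r v ^ 2 - v ^ 2| ≤ 2 * D * v :=
    fun v => abs_sq_sub_sq_le (hr.of_le one_le_two) hr0 hrr'
  refine ⟨D + 1, by positivity, 1, le_rfl, fun s hs => ?_⟩
  calc |(∫ v in (0 : ℝ)..s, r v ^ 2) - s ^ 3 / 3| ≤ D * s ^ 2 :=
        abs_integral_sq_sub_cube_le hr.continuous hr2 (by linarith)
    _ ≤ (D + 1) * s ^ 2 := by gcongr; linarith

theorem volume_asymptotics
    (r z : ℝ → ℝ)
    (hr : ContDiff ℝ 2 r) (hz : ContDiff ℝ 2 z)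
    (hr0 : r 0 = 0) (hr0' : deriv r 0 = 1)
    (hrpos : ∀ s > 0, 0 < r s)
    (harc : ∀ s ≥ 0, (deriv r s) ^ 2 + (deriv z s) ^ 2 = 1)
    (hjac : ∀ s > 0,
      deriv (deriv r) s + radialCurv r z s * angularCurv r z s * r s = 0)
    (hint1 : IntegrableOn (fun s => (angularCurv r z s) ^ 2 * (r s) ^ 2) (Set.Ici 0))
    (hint2 : IntegrableOn (fun s => |radialCurv r z s * angularCurv r z s| * (r s) ^ 2) (Set.Ici 0))
    : ∃ C > (0 : ℝ), ∃ s₀ ≥ (1 : ℝ), ∀ s ≥ s₀,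
      |(∫ v in (0 : ℝ)..s, (r v) ^ 2) - s ^ 3 / 3| ≤ C * s ^ 2 :=
  volume_asymptotics_general r z hr hr0 hrpos harc hjac hint1 hint2
end
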